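/- arXiv:0908.4034 — 4 statements merged into one kernel-verified Lean document; each statement's English description precedes it below -/
import Mathlib

section
/- The Fibonacci word is Sturmian: its complexity function satisfies p(m) = m + 1 for every integer m ≥ 1. -/
open scoped Classical

/-- The golden ratio `Φ = (1 + √5)/2`. -/
noncomputable def Φ : ℝ := (1 + Real.sqrt 5) / 2

/-- The Fibonacci word `w : ℕ → {0,1}`: `w n = 0` iff `n + 1 = ⌊kΦ⌋` for some `k ≥ 1`
(the fixed point `abaababa…` of `a ↦ ab`, `b ↦ a`, with `a` encoded as `0` and `b` as `1`). -/
noncomputable def fibWord (n : ℕ) : Fin 2 :=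
  if ∃ k : ℕ, 1 ≤ k ∧ ((n : ℤ) + 1) = ⌊(k : ℝ) * Φ⌋ then 0 else 1

/-- The complexity function of the Fibonacci word: `fibComplexity m` is the number of distinct
blocks `(w k, w (k+1), …, w (k+m−1))`, `k ≥ 0`, of length `m`. -/
noncomputable def fibComplexity (m : ℕ) : ℕ :=
  Set.ncard {v : Fin m → Fin 2 | ∃ k : ℕ, ∀ i : Fin m, v i = fibWord (k + (i : ℕ))}

/-!
Put `β = 2 - Φ = 1 - Φ⁻¹`. Since `n + 1 = ⌊kΦ⌋` iff an integer lies in `[(n+1)/Φ, (n+2)/Φ)`, the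
Fibonacci word is `w n = ⌊(n+2)β⌋ - ⌊(n+1)β⌋`, the coding of the irrational rotation by `β`.
The block of length `m` at position `k` is then determined by the floors `⌊y + iβ⌋`, `i ≤ m`, where
`y = {(k+1)β}`, i.e. by which of the `m` distinct cut points `1 - {iβ}`, `1 ≤ i ≤ m`, lie below `y`;
as these sets are nested, only their number matters. Each of the `m + 1` possible numbers occurs,
because the orbit `{(k+1)β}` is dense in `[0, 1)`.
-/

theorem Set.ncard_range_eq_of_eq_iff_eq {α β γ : Type*} {f : α → β} {g : α → γ}
    (h : ∀ a b, f a = f b ↔ g a = g b) : (Set.range f).ncard = (Set.range g).ncard := by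
  have hker : Setoid.ker f = Setoid.ker g := Setoid.ext fun a b => by simp only [Setoid.ker_def, h]
  rw [← Nat.card_coe_set_eq, ← Nat.card_coe_set_eq,
    ← Nat.card_congr (Setoid.quotientKerEquivRange f),
    ← Nat.card_congr (Setoid.quotientKerEquivRange g), hker]

theorem Finset.filter_le_eq_filter_le_iff_card_eq {α : Type*} [LinearOrder α] (T : Finset α)
    (y z : α) :
    T.filter (· ≤ y) = T.filter (· ≤ z) ↔ (T.filter (· ≤ y)).card = (T.filter (· ≤ z)).card := by
  refine ⟨congrArg _, fun h => ?_⟩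
  wlog hyz : y ≤ z generalizing y z
  · exact (this z y h.symm (le_of_not_ge hyz)).symm
  exact Finset.eq_of_subset_of_card_le
    (Finset.monotone_filter_right _ fun _ _ hy => hy.trans hyz) h.ge

theorem Finset.exists_Ioo_card_filter_le_eq {α : Type*} [LinearOrder α] {T : Finset α} {a b : α}
    (hab : a < b) (hT : ∀ t ∈ T, t ∈ Set.Ioo a b) {j : ℕ} (hj : j ≤ T.card) :
    ∃ c d, a ≤ c ∧ c < d ∧ d ≤ b ∧ ∀ x ∈ Set.Ioo c d, (T.filter (· ≤ x)).card = j := by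
  induction T using Finset.induction_on_max generalizing b with
  | empty => exact ⟨a, b, le_rfl, hab, le_rfl, fun x _ => by simp_all⟩
  | insert t s hlt ih =>
    have ht := hT t (Finset.mem_insert_self t s)
    have hts : t ∉ s := fun h => lt_irrefl _ (hlt t h)
    rw [Finset.card_insert_of_notMem hts] at hj
    rcases hj.lt_or_eq with hj | rfl
    · obtain ⟨c, d, hac, hcd, hdt, hcount⟩ := ih ht.1
        (fun u hu => ⟨(hT u (Finset.mem_insert_of_mem hu)).1, hlt u hu⟩) (by omega)
      refine ⟨c, d, hac, hcd, hdt.trans ht.2.le, fun x hx => ?_⟩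
      rw [Finset.filter_insert, if_neg (not_le.2 (hx.2.trans_le hdt)), hcount x hx]
    · refine ⟨t, b, ht.1.le, ht.2, le_rfl, fun x hx => ?_⟩
      rw [Finset.filter_true_of_mem fun u hu => ?_, Finset.card_insert_of_notMem hts]
      rcases Finset.mem_insert.1 hu with rfl | hu
      · exact hx.1.le
      · exact ((hlt u hu).trans hx.1).le

theorem Int.floor_fract_add {R : Type*} [Ring R] [LinearOrder R] [FloorRing R] [IsOrderedRing R]
    (a b : R) : ⌊Int.fract a + b⌋ = ⌊a + b⌋ - ⌊a⌋ := by
  rw [← Int.floor_sub_intCast, Int.fract, sub_add_eq_add_sub]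

theorem Int.exists_mem_Ico_iff_ceil_lt_ceil {R : Type*} [Ring R] [LinearOrder R] [FloorRing R]
    [IsOrderedRing R] (a b : R) :
    (∃ k : ℤ, a ≤ k ∧ k < b) ↔ ⌈a⌉ < ⌈b⌉ :=
  ⟨fun ⟨_, hak, hkb⟩ => (Int.ceil_le.2 hak).trans_lt (Int.lt_ceil.2 hkb),
    fun h => ⟨⌈a⌉, Int.le_ceil a, Int.lt_ceil.1 h⟩⟩

theorem exists_floor_nat_mul_eq_iff {K : Type*} [Field K] [LinearOrder K] [IsStrictOrderedRing K]
    [FloorRing K] {r : K} (hr : 0 < r) {N : ℤ} (hN : 0 < N) :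
    (∃ k : ℕ, 1 ≤ k ∧ N = ⌊(k : K) * r⌋) ↔ ⌈N / r⌉ < ⌈(N + 1) / r⌉ := by
  have hfloor : ∀ k : ℤ, N = ⌊(k : K) * r⌋ ↔ N / r ≤ k ∧ k < (N + 1) / r := fun k => by
    rw [eq_comm, Int.floor_eq_iff, div_le_iff₀ hr, lt_div_iff₀ hr]
  rw [← Int.exists_mem_Ico_iff_ceil_lt_ceil]
  constructor
  · rintro ⟨k, -, hk⟩
    exact ⟨k, (hfloor k).1 (mod_cast hk)⟩
  · rintro ⟨k, hk⟩
    have hk₀ : 0 < k := Int.cast_pos.1 ((div_pos (Int.cast_pos.2 hN) hr).trans_le hk.1)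
    refine ⟨k.toNat, by omega, ?_⟩
    rw [← Int.cast_natCast, Int.toNat_of_nonneg hk₀.le]
    exact (hfloor k).2 hk

/-- For `0 < β < 1`, the coding of the orbit of `x` under the rotation by `β` of `ℝ/ℤ`, with
letter `0` on `[0, 1 - β)` and letter `1` on `[1 - β, 1)`. -/
noncomputable def rotationWord (β x : ℝ) (n : ℕ) : Fin 2 :=
  if ⌊x + (n + 1) * β⌋ = ⌊x + n * β⌋ then 0 else 1

noncomputable def cutPoints (β : ℝ) (m : ℕ) : Finset ℝ :=
  (Finset.Icc 1 m).image fun i : ℕ => 1 - Int.fract (i * β)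

section Rotation

variable {β : ℝ}

theorem rotationWord_add (x : ℝ) (k n : ℕ) :
    rotationWord β x (k + n) = rotationWord β (Int.fract (x + k * β)) n := by
  simp only [rotationWord, Int.floor_fract_add, sub_left_inj]
  push_cast
  ring_nf

theorem floor_add_succ_mul (hβ₀ : 0 ≤ β) (hβ₁ : β ≤ 1) (y : ℝ) (n : ℕ) :
    ⌊y + (n + 1) * β⌋ = ⌊y + n * β⌋ + ((rotationWord β y n : ℕ) : ℤ) := by
  have hlo : ⌊y + n * β⌋ ≤ ⌊y + (n + 1) * β⌋ := Int.floor_le_floor (by nlinarith)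
  have hhi : ⌊y + (n + 1) * β⌋ ≤ ⌊y + n * β⌋ + 1 := by
    rw [← Int.floor_add_one]; exact Int.floor_le_floor (by nlinarith)
  unfold rotationWord
  split_ifs with h
  · simp [h]
  · simp only [Fin.isValue, Fin.val_one, Nat.cast_one]; omega

theorem floor_add_eq_floor_add_iff {y z : ℝ} (hy : y ∈ Set.Ico 0 1) (hz : z ∈ Set.Ico 0 1)
    (a : ℝ) : ⌊y + a⌋ = ⌊z + a⌋ ↔ (1 - Int.fract a ≤ y ↔ 1 - Int.fract a ≤ z) := by
  have hfloor : ∀ w ∈ Set.Ico (0 : ℝ) 1, ⌊w + a⌋ = ⌊a⌋ + if 1 - Int.fract a ≤ w then 1 else 0 := by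
    intro w ⟨hw₀, hw₁⟩
    have h₀ := Int.fract_nonneg a
    have h₁ := Int.fract_lt_one a
    have hsplit := Int.floor_fract_add a w
    rw [add_comm a w] at hsplit
    rw [show ⌊w + a⌋ = ⌊a⌋ + ⌊Int.fract a + w⌋ by omega]
    split_ifs with h
    · rw [add_right_inj, Int.floor_eq_iff]; push_cast; constructor <;> linarith
    · rw [add_right_inj, Int.floor_eq_iff]; push_cast; constructor <;> linarith
  rw [hfloor y hy, hfloor z hz]
  by_cases hya : 1 - Int.fract a ≤ y <;> by_cases hza : 1 - Int.fract a ≤ z <;> simp [hya, hza]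

theorem rotationWord_block_eq_iff (hβ₀ : 0 ≤ β) (hβ₁ : β ≤ 1) {y z : ℝ} (hy : y ∈ Set.Ico 0 1)
    (hz : z ∈ Set.Ico 0 1) (m : ℕ) :
    (∀ n < m, rotationWord β y n = rotationWord β z n) ↔
      ∀ n ≤ m, ⌊y + n * β⌋ = ⌊z + n * β⌋ := by
  constructor
  · intro h n hn
    induction n with
    | zero => simp [Int.floor_eq_zero_iff.2 hy, Int.floor_eq_zero_iff.2 hz]
    | succ n ih =>
      push_cast
      rw [floor_add_succ_mul hβ₀ hβ₁, floor_add_succ_mul hβ₀ hβ₁, ih (by omega), h n hn]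
  · intro h n hn
    simp only [rotationWord, ← Nat.cast_succ, h n hn.le, h (n + 1) hn]

theorem floor_add_mul_eq_iff_filter_cutPoints_eq {y z : ℝ} (hy : y ∈ Set.Ico 0 1)
    (hz : z ∈ Set.Ico 0 1) (m : ℕ) :
    (∀ n ≤ m, ⌊y + n * β⌋ = ⌊z + n * β⌋) ↔
      (cutPoints β m).filter (· ≤ y) = (cutPoints β m).filter (· ≤ z) := by
  rw [Finset.filter_inj', cutPoints, Finset.forall_mem_image]
  simp only [← floor_add_eq_floor_add_iff hy hz, Finset.mem_Icc]
  refine ⟨fun h n hn => h n hn.2, fun h n hn => ?_⟩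
  rcases n.eq_zero_or_pos with rfl | hn₀
  · simp [Int.floor_eq_zero_iff.2 hy, Int.floor_eq_zero_iff.2 hz]
  · exact h ⟨hn₀, hn⟩

theorem Irrational.fract_natCast_mul_pos (hβ : Irrational β) {n : ℕ} (hn : n ≠ 0) :
    0 < Int.fract (n * β) :=
  Int.fract_pos.2 fun h => (hβ.natCast_mul hn).ne_int _ h

theorem cutPoints_subset_Ioo (hβ : Irrational β) (m : ℕ) :
    ∀ t ∈ cutPoints β m, t ∈ Set.Ioo 0 1 := by
  simp only [cutPoints, Finset.forall_mem_image, Finset.mem_Icc]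
  intro n ⟨hn, _⟩
  have := hβ.fract_natCast_mul_pos (n := n) (by omega)
  constructor <;> linarith [Int.fract_lt_one (n * β)]

theorem card_cutPoints (hβ : Irrational β) (m : ℕ) : (cutPoints β m).card = m := by
  rw [cutPoints, Finset.card_image_of_injective _ fun i j h => ?_, Nat.card_Icc,
    Nat.add_sub_cancel]
  obtain ⟨z, hz⟩ := Int.fract_eq_fract.1 (sub_right_injective h)
  by_contra hij
  refine (hβ.intCast_mul (sub_ne_zero.2 (Nat.cast_injective.ne hij))).ne_int z ?_
  push_cast
  linarith

theorem exists_nat_fract_add_mul_mem_Ioo (hβ : Irrational β) (x : ℝ) {c d : ℝ} (hc : 0 ≤ c)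
    (hcd : c < d) (hd : d ≤ 1) : ∃ k : ℕ, Int.fract (x + k * β) ∈ Set.Ioo c d := by
  have hdense : DenseRange fun k : ℕ => (x : AddCircle (1 : ℝ)) + k • (β : AddCircle (1 : ℝ)) :=
    (add_left_surjective (x : AddCircle (1 : ℝ))).denseRange.comp
      (denseRange_zsmul_iff_nsmul.1 (AddCircle.denseRange_zsmul_coe_iff (a := β) (p := 1) |>.2
        (by simpa using hβ)))
      (continuous_const_add _)
  obtain ⟨k, y, hy, hyk⟩ := hdense.exists_mem_open
    (QuotientAddGroup.isOpenMap_coe _ isOpen_Ioo) ((Set.nonempty_Ioo.2 hcd).image _)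
  refine ⟨k, ?_⟩
  have hmem : ∀ w ∈ Set.Ioo c d, w ∈ Set.Ico (0 : ℝ) (0 + 1) :=
    fun w hw => ⟨hc.trans hw.1.le, by linarith [hw.2]⟩
  have hcoe : ((Int.fract (x + k * β) : ℝ) : AddCircle (1 : ℝ)) = y := by
    rw [AddCircle.coe_fract, hyk, AddCircle.coe_add, ← nsmul_eq_mul, AddCircle.coe_nsmul]
  rwa [(AddCircle.coe_eq_coe_iff_of_mem_Ico
    ⟨Int.fract_nonneg _, by simpa using Int.fract_lt_one _⟩ (hmem y hy)).1 hcoe]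

theorem range_card_filter_cutPoints (hβ : Irrational β) (x : ℝ) (m : ℕ) :
    (Set.range fun k : ℕ => ((cutPoints β m).filter (· ≤ Int.fract (x + k * β))).card) =
      Set.Iic m := by
  refine Set.Subset.antisymm ?_ fun j hj => ?_
  · rintro _ ⟨k, rfl⟩
    exact (Finset.card_filter_le _ _).trans (card_cutPoints hβ m).le
  · obtain ⟨c, d, hc, hcd, hd, hcount⟩ := Finset.exists_Ioo_card_filter_le_eq zero_lt_one
      (cutPoints_subset_Ioo hβ m) (j := j) ((card_cutPoints hβ m).symm ▸ hj)
    obtain ⟨k, hk⟩ := exists_nat_fract_add_mul_mem_Ioo hβ x hc hcd hd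
    exact ⟨k, hcount _ hk⟩

theorem ncard_range_rotationWord_block (hβ : Irrational β) (hβ₀ : 0 < β) (hβ₁ : β < 1)
    (x : ℝ) (m : ℕ) :
    (Set.range fun k (i : Fin m) => rotationWord β x (k + i)).ncard = m + 1 := by
  have hfract : ∀ k : ℕ, Int.fract (x + k * β) ∈ Set.Ico 0 1 :=
    fun k => ⟨Int.fract_nonneg _, Int.fract_lt_one _⟩
  have hblock : ∀ k l : ℕ, (fun i : Fin m => rotationWord β x (k + i)) =
      (fun i : Fin m => rotationWord β x (l + i)) ↔
      ((cutPoints β m).filter (· ≤ Int.fract (x + k * β))).card =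
        ((cutPoints β m).filter (· ≤ Int.fract (x + l * β))).card := fun k l => by
    simp only [rotationWord_add, funext_iff, Fin.forall_iff]
    rw [rotationWord_block_eq_iff hβ₀.le hβ₁.le (hfract k) (hfract l),
      floor_add_mul_eq_iff_filter_cutPoints_eq (hfract k) (hfract l),
      Finset.filter_le_eq_filter_le_iff_card_eq]
  rw [Set.ncard_range_eq_of_eq_iff_eq hblock, range_card_filter_cutPoints hβ x m,
    ← Finset.coe_Iic, Set.ncard_coe_finset, Nat.card_Iic]

end Rotation

theorem Φ_eq_goldenRatio : Φ = Real.goldenRatio := rfl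

theorem ceil_intCast_div_Φ (N : ℤ) : ⌈(N : ℝ) / Φ⌉ = N - ⌊N * (2 - Φ)⌋ := by
  have hinv : Φ⁻¹ = 1 - (2 - Φ) := by
    rw [Φ_eq_goldenRatio, Real.inv_goldenRatio, ← Real.one_sub_goldenRatio]; ring
  rw [div_eq_mul_inv, hinv, mul_one_sub, sub_eq_add_neg, Int.ceil_intCast_add, Int.ceil_neg]
  ring

theorem fibWord_eq_rotationWord : fibWord = rotationWord (2 - Φ) (2 - Φ) := by
  funext n
  refine if_congr ?_ rfl rfl
  have hβ₀ : 0 ≤ 2 - Φ := sub_nonneg.2 (Φ_eq_goldenRatio ▸ Real.goldenRatio_lt_two.le)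
  have hmono : ⌊((n + 1 : ℤ) : ℝ) * (2 - Φ)⌋ ≤ ⌊((n + 2 : ℤ) : ℝ) * (2 - Φ)⌋ :=
    Int.floor_le_floor (by gcongr; norm_num)
  have hN : (((n + 1 : ℤ) : ℝ) + 1) = ((n + 2 : ℤ) : ℝ) := by push_cast; ring
  have h₀ : 2 - Φ + n * (2 - Φ) = ((n + 1 : ℤ) : ℝ) * (2 - Φ) := by push_cast; ring
  have h₁ : 2 - Φ + (n + 1) * (2 - Φ) = ((n + 2 : ℤ) : ℝ) * (2 - Φ) := by push_cast; ring
  rw [exists_floor_nat_mul_eq_iff (Φ_eq_goldenRatio ▸ Real.goldenRatio_pos) (by positivity), hN,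
    ceil_intCast_div_Φ, ceil_intCast_div_Φ, h₀, h₁]
  omega

/-- The Fibonacci word is Sturmian: its complexity function satisfies `p(m) = m + 1` for every
`m ≥ 1`. -/
theorem stmt_9 : ∀ m : ℕ, 1 ≤ m → fibComplexity m = m + 1 := by
  intro m _
  have hΦ₁ := Φ_eq_goldenRatio ▸ Real.one_lt_goldenRatio
  have hΦ₂ := Φ_eq_goldenRatio ▸ Real.goldenRatio_lt_two
  have hirr : Irrational (2 - Φ) := by
    simpa using (Φ_eq_goldenRatio ▸ Real.goldenRatio_irrational).natCast_sub 2
  rw [fibComplexity, ← ncard_range_rotationWord_block hirr (by linarith) (by linarith) (2 - Φ) m,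
    ← fibWord_eq_rotationWord]
  congr 1
  ext v
  simp [funext_iff, eq_comm]
end

section
/- The Fibonacci word is not automatic: for every integer g ≥ 2, the Fibonacci word w : ℕ → {0,1} is not g-automatic. -/
open scoped Classical

/-- A sequence `u : ℕ → A` is `g`-automatic if there are a finite set `Q` of states, an initial
state `q₀`, a transition map `δ : Q → {0,…,g−1} → Q` and an output map `φ : Q → A` such that
`u n = φ (q_n)`, where `q_n` is obtained from `q₀` by applying `δ` successively to the base-`g`
digits of `n`, read from the most significant digit to the least significant digit. -/
def IsGAutomatic {A : Type*} (g : ℕ) (u : ℕ → A) : Prop :=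
  ∃ (Q : Type) (_ : Fintype Q) (q₀ : Q) (δ : Q → Fin g → Q) (φ : Q → A),
    ∀ n : ℕ, u n = φ ((Nat.digits g n).reverse.foldl
      (fun q d => if h : d < g then δ q ⟨d, h⟩ else q) q₀)

/-!
If `w` were `g`-automatic, the maps of the finite state set induced by reading `0 ^ k` could not
all be distinct, so `w (g ^ i * n) = w (g ^ j * n)` for some `i < j` and all `n`. By the Beatty
description, `w n = 1` iff the fractional part of `(n + 1) / Φ` lies in the window `[0, 1 - 1 / Φ]`,
of length less than `1 / 2`. The multiples of the irrational `g ^ i / Φ` are dense modulo `1`, and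
multiplication by `g ^ (j - i) ≥ 2` stretches the window too much to map it back into itself, so
some `n` puts `g ^ i * n` in the window and `g ^ j * n` outside it.
-/

open Set

theorem List.foldl_replicate {α β : Type*} (f : β → α → β) (b : β) (a : α) (k : ℕ) :
    (List.replicate k a).foldl f b = (f · a)^[k] b := by
  induction k generalizing b with
  | zero => rfl
  | succ k ih => rw [List.replicate_succ, List.foldl_cons, ih, Function.iterate_succ_apply]

theorem IsGAutomatic.exists_lt_forall_pow_mul_eq {A : Type*} {g : ℕ} {u : ℕ → A}
    (h : IsGAutomatic g u) (hg : 1 < g) :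
    ∃ i j : ℕ, i < j ∧ ∀ n, u (g ^ i * n) = u (g ^ j * n) := by
  obtain ⟨Q, _, q₀, δ, φ, hu⟩ := h
  set step : Q → ℕ → Q := fun q d => if h : d < g then δ q ⟨d, h⟩ else q
  have state_pow_mul : ∀ k n, 0 < n →
      (Nat.digits g (g ^ k * n)).reverse.foldl step q₀ =
        (step · 0)^[k] ((Nat.digits g n).reverse.foldl step q₀) := by
    intro k n hn
    rw [Nat.digits_base_pow_mul hg hn, List.reverse_append, List.reverse_replicate,
      List.foldl_append, List.foldl_replicate]
  obtain ⟨i, j, hij, hiter⟩ := Set.finite_univ.exists_lt_map_eq_of_forall_mem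
    (f := fun k : ℕ => (step · 0)^[k]) fun _ => mem_univ _
  refine ⟨i, j, hij, fun n => ?_⟩
  rcases n.eq_zero_or_pos with rfl | hn
  · simp
  rw [hu, hu, state_pow_mul i n hn, state_pow_mul j n hn]
  exact congrArg φ (congrFun hiter _)

theorem exists_nat_mem_Ioo_iff_one_sub_lt_fract {x c : ℝ} (hx : 0 ≤ x) :
    (∃ k : ℕ, x < k ∧ k < x + c) ↔ 1 - c < Int.fract x := by
  rw [Int.fract]
  constructor
  · rintro ⟨k, hxk, hkc⟩
    have : ⌊x⌋ + 1 ≤ (k : ℤ) := Int.floor_lt.2 (by exact_mod_cast hxk)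
    have : (⌊x⌋ : ℝ) + 1 ≤ k := by exact_mod_cast this
    linarith
  · intro h
    refine ⟨⌊x⌋₊ + 1, by exact_mod_cast Nat.lt_floor_add_one x, ?_⟩
    push_cast
    rw [natCast_floor_eq_intCast_floor hx]
    linarith

theorem exists_floor_mul_eq_succ_iff {r : ℝ} (hr : 0 < r) (hirr : Irrational r) (n : ℕ) :
    (∃ k : ℕ, 1 ≤ k ∧ (n : ℤ) + 1 = ⌊(k : ℝ) * r⌋) ↔ 1 - r⁻¹ < Int.fract ((n + 1) * r⁻¹) := by
  rw [← exists_nat_mem_Ioo_iff_one_sub_lt_fract (by positivity)]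
  refine exists_congr fun k => ?_
  have hne : (n + 1) * r⁻¹ ≠ k := by
    exact_mod_cast (hirr.inv.natCast_mul n.succ_ne_zero).ne_nat k
  have hle : ((n : ℝ) + 1 ≤ k * r) ↔ (n + 1) * r⁻¹ ≤ k := (mul_inv_le_iff₀ hr).symm
  have hlt : (k * r < (n : ℝ) + 1 + 1) ↔ k < (n + 1) * r⁻¹ + r⁻¹ := by
    rw [← add_one_mul, lt_mul_inv_iff₀ hr]
  rw [eq_comm, Int.floor_eq_iff]
  push_cast
  rw [hle, hlt]
  constructor
  · rintro ⟨-, hle, hlt⟩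
    exact ⟨lt_of_le_of_ne hle hne, hlt⟩
  · rintro ⟨hlt, hlt'⟩
    have : (0 : ℝ) < k := lt_of_le_of_lt (by positivity) hlt
    exact ⟨by exact_mod_cast this, hlt.le, hlt'⟩

noncomputable def beattyWord (r : ℝ) (n : ℕ) : Fin 2 :=
  if ∃ k : ℕ, 1 ≤ k ∧ ((n : ℤ) + 1) = ⌊(k : ℝ) * r⌋ then 0 else 1

theorem beattyWord_eq_one_iff {r : ℝ} (hr : 0 < r) (hirr : Irrational r) (n : ℕ) :
    beattyWord r n = 1 ↔ Int.fract ((n + 1) * r⁻¹) ≤ 1 - r⁻¹ := by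
  rw [beattyWord, ← not_lt, ← exists_floor_mul_eq_succ_iff hr hirr]
  split_ifs with h <;> simp [h]

theorem exists_nat_mul_mem_Ioo {γ u v : ℝ} (hγ : 0 < γ) (hγuv : γ < v - u) (hu : 0 ≤ u) :
    ∃ j : ℕ, j * γ ∈ Ioo u v := by
  refine ⟨⌊u / γ⌋₊ + 1, ?_, ?_⟩
  · rw [← div_lt_iff₀ hγ]
    exact_mod_cast Nat.lt_floor_add_one (u / γ)
  · have : (⌊u / γ⌋₊ : ℝ) * γ ≤ u := (le_div_iff₀ hγ).1 (Nat.floor_le (by positivity))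
    push_cast
    linarith

theorem Irrational.exists_fract_nat_mul_mem_Ioo {α : ℝ} (hα : Irrational α) {u v : ℝ}
    (hu : 0 ≤ u) (huv : u < v) (hv : v ≤ 1) :
    ∃ n : ℕ, Int.fract (n * α) ∈ Ioo u v := by
  -- Dirichlet: `γ = k * α - round (k * α)` has `|γ| < v - u`, so the multiples of `γ` step
  -- through `(u, v)`, or through `(u - 1, v - 1)` if `γ < 0`.
  obtain ⟨N, hN⟩ := exists_nat_one_div_lt (sub_pos.2 huv)
  obtain ⟨k, hk, -, hγ⟩ := Real.exists_nat_abs_mul_sub_round_le α N.succ_pos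
  set γ := k * α - round (k * α)
  have hγuv : |γ| < v - u := by
    refine hγ.trans_lt (lt_of_le_of_lt ?_ hN)
    gcongr
    linarith
  have hfract : ∀ j : ℕ, Int.fract (((j * k : ℕ) : ℝ) * α) = Int.fract (j * γ) := by
    intro j
    rw [show ((j * k : ℕ) : ℝ) * α = j * γ + ((j * round (k * α) : ℤ) : ℝ) by push_cast; ring,
      Int.fract_add_intCast]
  have hγ0 : γ ≠ 0 := sub_ne_zero.2 ((hα.natCast_mul hk.ne').ne_int _)
  rcases hγ0.lt_or_gt with hneg | hpos
  · obtain ⟨j, hj₁, hj₂⟩ := exists_nat_mul_mem_Ioo (u := 1 - v) (v := 1 - u) (neg_pos.2 hneg)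
      (by rw [abs_of_neg hneg] at hγuv; linarith) (sub_nonneg.2 hv)
    refine ⟨j * k, ?_⟩
    have : Int.fract (j * γ) = j * γ + 1 :=
      Int.fract_eq_iff.2 ⟨by linarith, by linarith, -1, by push_cast; ring⟩
    rw [hfract, this]
    constructor <;> linarith
  · obtain ⟨j, hj₁, hj₂⟩ := exists_nat_mul_mem_Ioo hpos
      (by rwa [abs_of_pos hpos] at hγuv) hu
    refine ⟨j * k, ?_⟩
    rw [hfract, Int.fract_eq_self.2 ⟨by linarith, by linarith⟩]
    exact ⟨hj₁, hj₂⟩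

theorem Irrational.exists_fract_succ_le_and_lt_fract_succ {θ : ℝ} (hθ : Irrational θ)
    (hθ₁ : 1 / 2 < θ) (hθ₂ : θ < 1) {a t : ℕ} (ha : 0 < a) (ht : 1 < t) :
    ∃ n : ℕ, Int.fract ((((a * n : ℕ) : ℝ) + 1) * θ) ≤ 1 - θ ∧
      1 - θ < Int.fract ((((a * t * n : ℕ) : ℝ) + 1) * θ) := by
  set β := 1 - θ
  have hβ : 0 < β := by linarith
  have ht' : (1 : ℝ) < t := by exact_mod_cast ht
  have ht0 : (0 : ℝ) < t := by linarith
  -- `k` is least with `β < (k + 1 - θ) / t`; the points `x` with `k + β < t * x + θ < k + 1`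
  -- then meet `(β, 2 * β)`, as the gaps between such windows have length `β / t < β`.
  set k : ℤ := ⌊t * β + θ - 1⌋ + 1
  have hk₁ : t * β + θ - 1 < k := by
    push_cast [k]
    exact Int.lt_floor_add_one _
  have hk₂ : (k : ℝ) ≤ t * β + θ := by
    have := Int.floor_le (t * β + θ - 1)
    push_cast [k]
    linarith
  have htβ : β < t * β := by nlinarith
  obtain ⟨n, hx⟩ := (hθ.natCast_mul ha.ne').exists_fract_nat_mul_mem_Ioo
    (u := max β ((k + β - θ) / t)) (v := min (2 * β) ((k + 1 - θ) / t))
    (le_max_of_le_left hβ.le)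
    (max_lt (lt_min (by linarith) ((lt_div_iff₀ ht0).2 (by linarith)))
      (lt_min ((div_lt_iff₀ ht0).2 (by linarith)) (by gcongr; linarith)))
    (min_le_of_left_le (by linarith))
  set y := (n : ℝ) * (a * θ)
  obtain ⟨hx₁, hx₂⟩ := max_lt_iff.1 hx.1
  obtain ⟨hx₃, hx₄⟩ := lt_min_iff.1 hx.2
  rw [div_lt_iff₀ ht0] at hx₂
  rw [lt_div_iff₀ ht0] at hx₄
  rw [Int.fract] at hx₁ hx₂ hx₃ hx₄
  refine ⟨n, ?_, ?_⟩
  · have : Int.fract ((((a * n : ℕ) : ℝ) + 1) * θ) = y - ⌊y⌋ + θ - 1 :=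
      Int.fract_eq_iff.2 ⟨by linarith, by linarith, ⌊y⌋ + 1, by push_cast [y]; ring⟩
    rw [this]
    linarith
  · have : Int.fract ((((a * t * n : ℕ) : ℝ) + 1) * θ) = t * (y - ⌊y⌋) + θ - k :=
      Int.fract_eq_iff.2 ⟨by linarith, by linarith, t * ⌊y⌋ + k, by push_cast [y]; ring⟩
    rw [this]
    linarith

theorem beattyWord_exists_ne_mul {r : ℝ} (hirr : Irrational r) (hr₁ : 1 < r) (hr₂ : r < 2)
    {a t : ℕ} (ha : 0 < a) (ht : 1 < t) :
    ∃ n : ℕ, beattyWord r (a * n) ≠ beattyWord r (a * t * n) := by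
  have hr : 0 < r := by linarith
  obtain ⟨n, hle, hlt⟩ := hirr.inv.exists_fract_succ_le_and_lt_fract_succ
    (by rw [one_div]; exact inv_strictAnti₀ hr hr₂) (inv_lt_one_of_one_lt₀ hr₁) ha ht
  refine ⟨n, fun h => ?_⟩
  rw [← beattyWord_eq_one_iff hr hirr] at hle
  rw [← not_le, ← beattyWord_eq_one_iff hr hirr, ← h] at hlt
  exact hlt hle

theorem not_isGAutomatic_beattyWord {r : ℝ} (hirr : Irrational r) (hr₁ : 1 < r) (hr₂ : r < 2)
    {g : ℕ} (hg : 1 < g) : ¬ IsGAutomatic g (beattyWord r) := by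
  intro h
  obtain ⟨i, j, hij, heq⟩ := h.exists_lt_forall_pow_mul_eq hg
  obtain ⟨n, hn⟩ := beattyWord_exists_ne_mul hirr hr₁ hr₂ (pow_pos (zero_lt_one.trans hg) i)
    (Nat.one_lt_pow (Nat.sub_pos_of_lt hij).ne' hg)
  rw [← pow_add, Nat.add_sub_cancel' hij.le] at hn
  exact hn (heq n)

/-- The Fibonacci word is not automatic: for every integer `g ≥ 2` it is not `g`-automatic. -/
theorem stmt_10 : ∀ g : ℕ, 2 ≤ g → ¬ IsGAutomatic g fibWord := by
  intro g hg
  exact not_isGAutomatic_beattyWord (r := Φ) Real.goldenRatio_irrational Real.one_lt_goldenRatio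
    Real.goldenRatio_lt_two hg
end

section
/- Let g ≥ 2 be an integer. Then the Liouville–Fredholm number θ = Σ_{n≥0} g^{−n²} is irrational. -/
/-!
Multiplying `θ` by `g ^ k ^ 2` turns the first `k + 1` terms of the series into an integer and
leaves `g ^ k ^ 2` times the tail `∑_{n > k} g ^ (-n ^ 2)`, which is positive and at most
`g ^ (-(2k + 1)) / (1 - 1 / g)`. So integer multiples of `θ` come arbitrarily close to, but never
reach, integers, which is impossible for a rational number `p / q`: there the distances are
multiples of `1 / q`.
-/

open Filter Topology Finset

theorem irrational_of_intCast_mul_sub_pos_tendsto_zero {x : ℝ} (m a : ℕ → ℤ)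
    (hpos : ∀ k, 0 < m k * x - a k) (hlim : Tendsto (fun k => m k * x - a k) atTop (𝓝 0)) :
    Irrational x := by
  rintro ⟨q, rfl⟩
  obtain ⟨k, hk⟩ := (hlim.eventually (gt_mem_nhds (by positivity : (0 : ℝ) < 1 / q.den))).exists
  have hden : (m k : ℝ) * q - a k = ((m k * q.num - a k * q.den : ℤ) : ℝ) / q.den := by
    rw [Rat.cast_def]; push_cast; field_simp
  have hk_pos := hpos k
  rw [hden] at hk_pos hk
  have hnum : 0 < m k * q.num - a k * q.den := by
    exact_mod_cast (div_pos_iff_of_pos_right (by positivity)).1 hk_pos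
  have hnum_ge : (1 : ℝ) ≤ ((m k * q.num - a k * q.den : ℤ) : ℝ) := by exact_mod_cast hnum
  exact hk.not_ge (div_le_div_of_nonneg_right hnum_ge (by positivity))

section
variable {r : ℝ}

theorem summable_pow_sq (hr0 : 0 ≤ r) (hr1 : r < 1) : Summable fun n : ℕ => r ^ (n ^ 2) :=
  (summable_geometric_of_lt_one hr0 hr1).of_nonneg_of_le (fun _ => by positivity)
    fun n => pow_le_pow_of_le_one hr0 hr1.le (Nat.le_self_pow two_ne_zero n)

theorem tsum_pow_sq_add_pos (hr0 : 0 < r) (hr1 : r < 1) (k : ℕ) :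
    0 < ∑' n : ℕ, r ^ ((n + k) ^ 2) :=
  ((summable_nat_add_iff k).2 (summable_pow_sq hr0.le hr1)).tsum_pos (fun _ => by positivity) 0
    (by positivity)

theorem tsum_pow_sq_add_le (hr0 : 0 ≤ r) (hr1 : r < 1) (k : ℕ) :
    ∑' n : ℕ, r ^ ((n + k) ^ 2) ≤ r ^ (k ^ 2) / (1 - r) := by
  rw [div_eq_mul_inv, ← tsum_geometric_of_lt_one hr0 hr1, ← tsum_mul_left]
  refine ((summable_nat_add_iff k).2 (summable_pow_sq hr0 hr1)).tsum_le_tsum (fun n => ?_)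
    ((summable_geometric_of_lt_one hr0 hr1).mul_left _)
  have hexp : k ^ 2 + n ≤ (n + k) ^ 2 := by
    rw [add_sq]; linarith [Nat.le_self_pow two_ne_zero n, Nat.zero_le (2 * n * k)]
  rw [← pow_add]
  exact pow_le_pow_of_le_one hr0 hr1.le hexp

end

theorem natCast_pow_mul_sum_one_div_pow_sq {g : ℕ} (hg : g ≠ 0) (k : ℕ) :
    (g : ℝ) ^ (k ^ 2) * ∑ n ∈ range (k + 1), (1 / (g : ℝ)) ^ (n ^ 2) =
      ((∑ n ∈ range (k + 1), g ^ (k ^ 2 - n ^ 2) : ℕ) : ℝ) := by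
  rw [mul_sum]
  push_cast
  refine sum_congr rfl fun n hn => ?_
  have hnk : n ^ 2 ≤ k ^ 2 := Nat.pow_le_pow_left (Nat.lt_succ_iff.mp (mem_range.mp hn)) 2
  rw [pow_sub₀ _ (by exact_mod_cast hg) hnk, one_div_pow, mul_one_div, div_eq_mul_inv]

theorem one_div_natCast_lt_one {g : ℕ} (hg : 1 < g) : 1 / (g : ℝ) < 1 := by
  rw [div_lt_one (by positivity)]; exact_mod_cast hg

theorem natCast_pow_sq_mul_tsum_sub_eq {g : ℕ} (hg : 1 < g) (k : ℕ) :
    (g : ℝ) ^ (k ^ 2) * ∑' n : ℕ, (1 / (g : ℝ)) ^ (n ^ 2) -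
        ((∑ n ∈ range (k + 1), g ^ (k ^ 2 - n ^ 2) : ℕ) : ℝ) =
      (g : ℝ) ^ (k ^ 2) * ∑' n : ℕ, (1 / (g : ℝ)) ^ ((n + (k + 1)) ^ 2) := by
  rw [← natCast_pow_mul_sum_one_div_pow_sq (by omega), ← mul_sub,
    ← (summable_pow_sq (by positivity) (one_div_natCast_lt_one hg)).sum_add_tsum_nat_add (k + 1),
    add_sub_cancel_left]

theorem natCast_pow_sq_mul_tsum_pow_sq_add_le {g : ℕ} (hg : 1 < g) (k : ℕ) :
    (g : ℝ) ^ (k ^ 2) * ∑' n : ℕ, (1 / (g : ℝ)) ^ ((n + (k + 1)) ^ 2) ≤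
      (1 / (g : ℝ)) ^ (2 * k + 1) / (1 - 1 / g) := by
  calc _ ≤ (g : ℝ) ^ (k ^ 2) * ((1 / (g : ℝ)) ^ ((k + 1) ^ 2) / (1 - 1 / g)) :=
        mul_le_mul_of_nonneg_left
          (tsum_pow_sq_add_le (by positivity) (one_div_natCast_lt_one hg) _) (by positivity)
    _ = (1 / (g : ℝ)) ^ (2 * k + 1) / (1 - 1 / g) := by
        rw [show (k + 1) ^ 2 = k ^ 2 + (2 * k + 1) by ring, pow_add, ← mul_div_assoc,
          ← mul_assoc, ← mul_pow, mul_one_div_cancel (by positivity), one_pow, one_mul]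

/-- For any integer `g ≥ 2`, the Liouville–Fredholm number `θ = Σ_{n≥0} g^{−n²}` is
irrational. -/
theorem stmt_18 (g : ℕ) (hg : 2 ≤ g) :
    Irrational (∑' n : ℕ, (1 / (g : ℝ)) ^ (n ^ 2)) := by
  have hg1 : 1 < g := hg
  have hr1 := one_div_natCast_lt_one hg1
  have hpos (k : ℕ) : 0 < (g : ℝ) ^ (k ^ 2) * ∑' n : ℕ, (1 / (g : ℝ)) ^ ((n + (k + 1)) ^ 2) :=
    mul_pos (by positivity) (tsum_pow_sq_add_pos (by positivity) hr1 _)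
  have hlim : Tendsto (fun k : ℕ => (1 / (g : ℝ)) ^ (2 * k + 1) / (1 - 1 / g)) atTop (𝓝 0) := by
    have hexp : Tendsto (fun k : ℕ => 2 * k + 1) atTop atTop :=
      tendsto_atTop_mono (fun k => by simp only [id]; omega) tendsto_id
    simpa only [zero_div, Function.comp_def] using
      ((tendsto_pow_atTop_nhds_zero_of_lt_one (by positivity) hr1).comp hexp).div_const _
  refine irrational_of_intCast_mul_sub_pos_tendsto_zero (fun k => (g : ℤ) ^ (k ^ 2))
    (fun k => (∑ n ∈ range (k + 1), g ^ (k ^ 2 - n ^ 2) : ℕ)) (fun k => ?_) ?_ <;>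
    simp only [Int.cast_pow, Int.cast_natCast, natCast_pow_sq_mul_tsum_sub_eq hg1]
  · exact hpos k
  · exact tendsto_of_tendsto_of_tendsto_of_le_of_le tendsto_const_nhds hlim (fun k => (hpos k).le)
      (natCast_pow_sq_mul_tsum_pow_sq_add_le hg1)
end

section
/- π = Σ_{n≥0} (4/(8n+1) − 2/(8n+4) − 1/(8n+5) − 1/(8n+6))·16^{−n}. -/
/-! With `ζ = (1 + i)/2` and `r = √2/2`, the four numbers `ζ, ζ̄, r, -r` all have eighth power
`1/16`, and the combination `a m = (2 - 2i) ζ^m + (2 + 2i) ζ̄^m - 2 r^m - 2 (-r)^m` takes the values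
`0, 4, 0, 0, -2, -1, -1, 0` for `m = 0, …, 7`. Grouping `∑ a m / m` in blocks of eight therefore
gives the BBP series, while `∑ z^m / m = -log (1 - z)` evaluates it: `1 - ζ = ζ̄`,
`log ζ = log r + iπ/4` and `(1 - r)(1 + r) = r²`, so all logarithms of `r` cancel and `π` remains. -/

open Complex ComplexConjugate Finset
open scoped Real

theorem HasSum.sum_range_mul_add {M : Type*} [AddCommMonoid M] [TopologicalSpace M]
    [ContinuousAdd M] [RegularSpace M] {f : ℕ → M} {a : M} (hf : HasSum f a) (N : ℕ) [NeZero N] :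
    HasSum (fun n ↦ ∑ k ∈ range N, f (N * n + k)) a := by
  refine ((Nat.divModEquiv N).symm.hasSum_iff.mpr hf).prod_fiberwise fun n ↦ ?_
  simpa [Fin.sum_univ_eq_sum_range (fun k ↦ f (N * n + k)), mul_comm] using
    hasSum_fintype fun k : Fin N ↦ f (N * n + k)

namespace BBP

noncomputable def r : ℝ := √2 / 2

noncomputable def ζ : ℂ := (1 + I) / 2

noncomputable def coeff (m : ℕ) : ℂ :=
  (2 - 2 * I) * ζ ^ m + (2 + 2 * I) * conj ζ ^ m - 2 * r ^ m - 2 * (-r) ^ m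

lemma r_sq : r ^ 2 = 1 / 2 := by
  rw [r, div_pow, Real.sq_sqrt zero_le_two]; norm_num

lemma r_pos : 0 < r := by unfold r; positivity

lemma r_lt_one : r < 1 := by nlinarith [r_sq, r_pos]

lemma log_one_sub_r_add_log_one_add_r :
    Real.log (1 - r) + Real.log (1 + r) = 2 * Real.log r := by
  rw [← Real.log_mul (by linarith [r_lt_one]) (by linarith [r_pos]),
    show (1 - r) * (1 + r) = r ^ 2 by linear_combination (-2 : ℝ) * r_sq, Real.log_pow]
  norm_num

lemma ζ_eq_polar : ζ = r * (cos (π / 4 : ℝ) + sin (π / 4 : ℝ) * I) := by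
  rw [← ofReal_cos, ← ofReal_sin, Real.cos_pi_div_four, Real.sin_pi_div_four, ζ, r]
  push_cast
  have h : ((√2 : ℝ) : ℂ) ^ 2 = 2 := by exact_mod_cast Real.sq_sqrt zero_le_two
  linear_combination -(1 + I) / 4 * h

lemma norm_ζ : ‖ζ‖ = r := by
  rw [ζ_eq_polar, norm_mul, norm_cos_add_sin_mul_I, mul_one, norm_real,
    Real.norm_of_nonneg r_pos.le]

lemma arg_ζ : arg ζ = π / 4 := by
  rw [ζ_eq_polar, arg_mul_cos_add_sin_mul_I r_pos]
  constructor <;> linarith [Real.pi_pos]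

lemma log_ζ : log ζ = Real.log r + π / 4 * I := by
  rw [log, norm_ζ, arg_ζ]; push_cast; ring

lemma log_conj_ζ : log (conj ζ) = Real.log r - π / 4 * I := by
  rw [log_conj _ (by rw [arg_ζ]; linarith [Real.pi_pos]), log_ζ]
  simp [conj_ofReal, map_ofNat, sub_eq_add_neg]

lemma conj_ζ : conj ζ = (1 - I) / 2 := by
  rw [ζ, map_div₀, map_add, conj_I, map_one, map_ofNat, sub_eq_add_neg]

lemma one_sub_ζ : 1 - ζ = conj ζ := by rw [conj_ζ, ζ]; ring

lemma one_sub_conj_ζ : 1 - conj ζ = ζ := by rw [← one_sub_ζ]; ring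

lemma ζ_pow_eight : ζ ^ 8 = 1 / 16 := by
  have hsq : ζ ^ 2 = I / 2 := by rw [ζ]; ring_nf; rw [I_sq]; ring
  rw [show ζ ^ 8 = (ζ ^ 2) ^ 4 by ring, hsq, div_pow, I_pow_four]; norm_num

lemma coeff_eight_mul_add (n k : ℕ) : coeff (8 * n + k) = (16 ^ n)⁻¹ * coeff k := by
  have hconj : conj ζ ^ 8 = 1 / 16 := by
    rw [← map_pow, ζ_pow_eight, map_div₀, map_one, map_ofNat]
  have hr : (r : ℂ) ^ 8 = 1 / 16 := by
    rw [show (r : ℂ) ^ 8 = ((r ^ 2 : ℝ) : ℂ) ^ 4 by push_cast; ring, r_sq]; norm_num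
  simp only [coeff, pow_add, pow_mul, ζ_pow_eight, hconj, neg_pow (r : ℂ), hr, one_div, inv_pow]
  ring

lemma sum_range_eight_coeff_div (x : ℂ) :
    ∑ k ∈ range 8, coeff k / (x + k) = 4 / (x + 1) - 2 / (x + 4) - 1 / (x + 5) - 1 / (x + 6) := by
  have hr4 : r ^ 4 = 1 / 4 := by rw [show r ^ 4 = (r ^ 2) ^ 2 by ring, r_sq]; norm_num
  have hr6 : r ^ 6 = 1 / 8 := by rw [show r ^ 6 = (r ^ 2) ^ 3 by ring, r_sq]; norm_num
  have hvalues : coeff 0 = 0 ∧ coeff 1 = 4 ∧ coeff 2 = 0 ∧ coeff 3 = 0 ∧ coeff 4 = -2 ∧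
      coeff 5 = -1 ∧ coeff 6 = -1 ∧ coeff 7 = 0 := by
    simp only [coeff, conj_ζ]
    simp only [ζ, Complex.ext_iff]
    norm_num [pow_succ]
    ring_nf
    norm_num [r_sq, hr4, hr6]
  obtain ⟨h0, h1, h2, h3, h4, h5, h6, h7⟩ := hvalues
  simp only [sum_range_succ, sum_range_zero, h0, h1, h2, h3, h4, h5, h6, h7]
  push_cast
  ring

theorem hasSum_coeff_div : HasSum (fun m : ℕ ↦ coeff m / m) π := by
  have hζ : ‖ζ‖ < 1 := norm_ζ.trans_lt r_lt_one
  have hr : ‖(r : ℂ)‖ < 1 := by rw [norm_real, Real.norm_of_nonneg r_pos.le]; exact r_lt_one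
  have H := (((hasSum_taylorSeries_neg_log hζ).mul_left (2 - 2 * I)).add
    ((hasSum_taylorSeries_neg_log ((norm_conj ζ).trans_lt hζ)).mul_left (2 + 2 * I))).add
    (((hasSum_taylorSeries_neg_log hr).mul_left (-2)).add
      ((hasSum_taylorSeries_neg_log (norm_neg (r : ℂ) ▸ hr)).mul_left (-2)))
  suffices hval : (2 - 2 * I) * -log (1 - ζ) + (2 + 2 * I) * -log (1 - conj ζ) +
      (-2 * -log (1 - r) + -2 * -log (1 - -r)) = π by
    rw [← hval]; exact H.congr_fun fun m ↦ by simp only [coeff]; ring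
  have hlog : log (1 - r) + log (1 + r) = 2 * Real.log r := by
    have h := congrArg ((↑) : ℝ → ℂ) log_one_sub_r_add_log_one_add_r
    push_cast [ofReal_log (sub_pos.2 r_lt_one).le, ofReal_log (by linarith [r_pos] : 0 ≤ 1 + r)]
      at h
    exact h
  rw [one_sub_conj_ζ, one_sub_ζ, sub_neg_eq_add, log_ζ, log_conj_ζ]
  linear_combination (2 : ℂ) * hlog - π * I_sq

end BBP

/-- The Bailey–Borwein–Plouffe formula:
`π = Σ_{n≥0} (4/(8n+1) − 2/(8n+4) − 1/(8n+5) − 1/(8n+6))·16^{−n}`. -/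
theorem stmt_19 :
    Real.pi = ∑' n : ℕ,
      (4 / (8 * (n : ℝ) + 1) - 2 / (8 * (n : ℝ) + 4) - 1 / (8 * (n : ℝ) + 5) -
        1 / (8 * (n : ℝ) + 6)) * ((16 : ℝ) ^ n)⁻¹ := by
  have h := BBP.hasSum_coeff_div.sum_range_mul_add 8
  simp only [BBP.coeff_eight_mul_add, Nat.cast_add, Nat.cast_mul, mul_div_assoc, ← mul_sum,
    BBP.sum_range_eight_coeff_div] at h
  refine (hasSum_ofReal.mp ?_).tsum_eq.symm
  convert h using 2 with n
  push_cast
  ring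
end
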